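/- Let A be an N×N real matrix with nonnegative entries, β ≥ 0 with β · max_i ∑_j A_{ij} < 1, and α ∈ ℝ. Partition the index set as V = R ∪ S with R and S disjoint, and let x = α (I − β A)^{-1} 𝟙 be the equilibrium action vector of the full network with restrictions x_R, x_S. Then the change in the surviving agents' equilibrium actions when the agents in S are removed is exactly x_R − α (I − β A_{RR})^{-1} 𝟙_R = β (I − β A_{RR})^{-1} A_{RS} x_S; in particular, if α ≥ 0 this change is entrywise nonnegative. -/

import Mathlib

open Matrix

/-- Principal submatrix of `A` indexed by the subset `S` (e.g. the block `A_{RR}`). -/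
def psub {N : ℕ} (A : Matrix (Fin N) (Fin N) ℝ) (S : Finset (Fin N)) :
    Matrix {i // i ∈ S} {i // i ∈ S} ℝ :=
  Matrix.of fun i j => A i.1 j.1

/-- Off-diagonal block `A_{RS}` of `A` for subsets `R`, `S`. -/
def pblock {N : ℕ} (A : Matrix (Fin N) (Fin N) ℝ) (R S : Finset (Fin N)) :
    Matrix {i // i ∈ R} {j // j ∈ S} ℝ :=
  Matrix.of fun i j => A i.1 j.1

/-!
The full equilibrium satisfies `x = α 𝟙 + β A x`. Reading its rows in `R` and splitting each sum
over `R ∪ S` gives `(I - β A_RR) x_R = α 𝟙 + β A_RS x_S`; inverting `I - β A_RR` yields the formula.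
For a nonnegative `M` with row sums `< 1`, `(I - M) y ≥ 0` forces `y ≥ 0` (minimum principle), so
`I - M` is injective, hence invertible, and its inverse preserves nonnegative vectors. Thus `x ≥ 0`
when `α ≥ 0`, and the change `β (I - β A_RR)⁻¹ A_RS x_S` is nonnegative.
-/

namespace Matrix

theorem mulVec_nonneg {m n R : Type*} [Semiring R] [PartialOrder R] [IsOrderedRing R]
    [Fintype n] {M : Matrix m n R} (hM : ∀ i j, 0 ≤ M i j) {v : n → R} (hv : 0 ≤ v) : 0 ≤ M *ᵥ v :=
  fun i => dotProduct_nonneg_of_nonneg (hM i) hv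

section RowSubstochastic

variable {m K : Type*} [Fintype m] [DecidableEq m] [Field K] [LinearOrder K]
  [IsStrictOrderedRing K] {M : Matrix m m K}

/-- Minimum principle: at an index `i` minimising `y`,
`y i ≥ ∑ j, M i j * y j ≥ (∑ j, M i j) * y i`, which forces `y i ≥ 0` as the row sum is `< 1`. -/
theorem nonneg_of_one_sub_mulVec_nonneg (hM : ∀ i j, 0 ≤ M i j) (hrow : ∀ i, ∑ j, M i j < 1)
    {y : m → K} (hy : 0 ≤ (1 - M) *ᵥ y) : 0 ≤ y := by
  intro k
  have _ : Nonempty m := ⟨k⟩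
  obtain ⟨i, hi⟩ := Finite.exists_min y
  have hyi : ∑ j, M i j * y j ≤ y i := by
    have := hy i
    rw [sub_mulVec, one_mulVec] at this
    simpa [mulVec, dotProduct] using this
  have hlow : (∑ j, M i j) * y i ≤ ∑ j, M i j * y j := by
    rw [Finset.sum_mul]
    exact Finset.sum_le_sum fun j _ => mul_le_mul_of_nonneg_left (hi j) (hM i j)
  have hyi_nonneg : 0 ≤ y i := by nlinarith [hrow i]
  exact hyi_nonneg.trans (hi k)

theorem isUnit_det_one_sub (hM : ∀ i j, 0 ≤ M i j) (hrow : ∀ i, ∑ j, M i j < 1) :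
    IsUnit (1 - M).det := by
  rw [← isUnit_iff_isUnit_det, ← mulVec_injective_iff_isUnit, ← coe_mulVecLin,
    injective_iff_map_eq_zero]
  intro y hy
  have hy' : (1 - M) *ᵥ y = 0 := hy
  have hpos := nonneg_of_one_sub_mulVec_nonneg hM hrow (y := y) (by rw [hy'])
  have hneg := nonneg_of_one_sub_mulVec_nonneg hM hrow (y := -y)
    (by rw [mulVec_neg, hy', neg_zero])
  exact le_antisymm (neg_nonneg.mp hneg) hpos

theorem inv_one_sub_mulVec_nonneg (hM : ∀ i j, 0 ≤ M i j) (hrow : ∀ i, ∑ j, M i j < 1)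
    {v : m → K} (hv : 0 ≤ v) : 0 ≤ (1 - M)⁻¹ *ᵥ v := by
  refine nonneg_of_one_sub_mulVec_nonneg hM hrow ?_
  rwa [mulVec_mulVec, mul_nonsing_inv _ (isUnit_det_one_sub hM hrow), one_mulVec]

end RowSubstochastic

theorem eq_add_mulVec_iff {m R : Type*} [Fintype m] [DecidableEq m] [CommRing R]
    {M : Matrix m m R} (h : IsUnit (1 - M).det) {y b : m → R} :
    y = b + M *ᵥ y ↔ y = (1 - M)⁻¹ *ᵥ b :=
  calc y = b + M *ᵥ y ↔ (1 - M) *ᵥ y = b := by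
        rw [sub_mulVec, one_mulVec, sub_eq_iff_eq_add, add_comm]
    _ ↔ y = (1 - M)⁻¹ *ᵥ b :=
      ⟨fun hy => by rw [← hy, mulVec_mulVec, nonsing_inv_mul _ h, one_mulVec],
        fun hy => by rw [hy, mulVec_mulVec, mul_nonsing_inv _ h, one_mulVec]⟩

end Matrix

theorem sum_psub_apply_le {N : ℕ} {A : Matrix (Fin N) (Fin N) ℝ} (hA : ∀ i j, 0 ≤ A i j)
    (R : Finset (Fin N)) (i : {i // i ∈ R}) : ∑ j, psub A R i j ≤ ∑ j, A i j :=
  calc ∑ j, psub A R i j = ∑ j ∈ R, A i j := Finset.sum_coe_sort R (A i)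
    _ ≤ ∑ j, A i j := Finset.sum_le_sum_of_subset_of_nonneg (Finset.subset_univ R)
        fun j _ _ => hA i j

theorem mulVec_apply_eq_psub_add_pblock {N : ℕ} (A : Matrix (Fin N) (Fin N) ℝ)
    {R S : Finset (Fin N)} (hdisj : Disjoint R S) (hcover : R ∪ S = Finset.univ)
    (x : Fin N → ℝ) (i : {i // i ∈ R}) :
    (A *ᵥ x) i = (psub A R *ᵥ fun j => x j.1) i + (pblock A R S *ᵥ fun j => x j.1) i := by
  simp only [mulVec, dotProduct, psub, pblock, of_apply]
  rw [Finset.sum_coe_sort R (fun j => A i j * x j), Finset.sum_coe_sort S (fun j => A i j * x j),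
    ← Finset.sum_union hdisj, hcover]

theorem restrict_eq_add_mulVec {N : ℕ} (A : Matrix (Fin N) (Fin N) ℝ) (β : ℝ)
    {R S : Finset (Fin N)} (hdisj : Disjoint R S) (hcover : R ∪ S = Finset.univ)
    {x b : Fin N → ℝ} (hx : x = b + (β • A) *ᵥ x) :
    (fun i : {i // i ∈ R} => x i) =
      ((fun i : {i // i ∈ R} => b i) + β • (pblock A R S *ᵥ fun j => x j.1)) +
        (β • psub A R) *ᵥ fun i => x i := by
  funext i
  have := congrFun hx i
  rw [smul_mulVec, Pi.add_apply, Pi.smul_apply,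
    mulVec_apply_eq_psub_add_pblock A hdisj hcover] at this
  simp only [Pi.add_apply, Pi.smul_apply, smul_mulVec, this]
  ring

/-- The change in the surviving agents' equilibrium actions when the agents in `S`
are removed equals `β (I - β A_{RR})⁻¹ A_{RS} x_S`; if `α ≥ 0` it is entrywise
nonnegative. -/
theorem activity_change_on_removal {N : ℕ} (A : Matrix (Fin N) (Fin N) ℝ) (β α : ℝ)
    (hA : ∀ i j, 0 ≤ A i j) (hβ : 0 ≤ β) (hrow : ∀ i, β * ∑ j, A i j < 1)
    (R S : Finset (Fin N)) (hdisj : Disjoint R S) (hcover : R ∪ S = Finset.univ)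
    (x : Fin N → ℝ) (hx : x = α • ((1 - β • A)⁻¹ *ᵥ fun _ => 1)) :
    ((fun i : {i // i ∈ R} => x i.1) - α • ((1 - β • psub A R)⁻¹ *ᵥ fun _ => 1)) =
        β • ((1 - β • psub A R)⁻¹ *ᵥ
          (pblock A R S *ᵥ fun j : {j // j ∈ S} => x j.1)) ∧
      (0 ≤ α → ∀ i : {i // i ∈ R},
        0 ≤ (x i.1 - (α • ((1 - β • psub A R)⁻¹ *ᵥ fun _ => (1 : ℝ))) i)) := by
  have hβA : ∀ i j, 0 ≤ (β • A) i j := fun i j => mul_nonneg hβ (hA i j)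
  have hβA_row : ∀ i, ∑ j, (β • A) i j < 1 := fun i => by simpa [Finset.mul_sum] using hrow i
  have hβARR : ∀ i j, 0 ≤ (β • psub A R) i j := fun i j => mul_nonneg hβ (hA i j)
  have hβARR_row : ∀ i, ∑ j, (β • psub A R) i j < 1 := fun i =>
    calc ∑ j, (β • psub A R) i j = β * ∑ j, psub A R i j := by simp [Finset.mul_sum]
      _ ≤ β * ∑ j, A i j := mul_le_mul_of_nonneg_left (sum_psub_apply_le hA R i) hβ
      _ < 1 := hrow i
  have hfix : x = α • (fun _ => 1) + (β • A) *ᵥ x := by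
    rwa [eq_add_mulVec_iff (isUnit_det_one_sub hβA hβA_row), mulVec_smul]
  have hrestrict : (fun i : {i // i ∈ R} => x i.1) = (1 - β • psub A R)⁻¹ *ᵥ
      ((α • fun _ => 1) + β • (pblock A R S *ᵥ fun j : {j // j ∈ S} => x j.1)) :=
    (eq_add_mulVec_iff (isUnit_det_one_sub hβARR hβARR_row)).mp
      (restrict_eq_add_mulVec A β hdisj hcover hfix)
  rw [mulVec_add, mulVec_smul, mulVec_smul] at hrestrict
  have hchange := sub_eq_of_eq_add' hrestrict
  refine ⟨hchange, fun hα i => ?_⟩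
  have hx_nonneg : 0 ≤ x :=
    hx ▸ smul_nonneg hα (inv_one_sub_mulVec_nonneg hβA hβA_row fun _ => zero_le_one)
  have hchange_nonneg := smul_nonneg hβ (inv_one_sub_mulVec_nonneg hβARR hβARR_row
    (mulVec_nonneg (M := pblock A R S) (fun i j => hA i j) fun j => hx_nonneg j))
  rw [← hchange] at hchange_nonneg
  exact hchange_nonneg i
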